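/- The null-preserving property is necessary: there exist queries Q₁, Q₂ over a schema with a virtual boolean/int column v that are equivalent for all databases (where v may take arbitrary values including none), and an expression e with e none ≠ none, such that after substituting e for v the instantiated queries are inequivalent on some database. Concretely: Q₁ = project v from (A RIGHT JOIN B ON FALSE) where v is a left-side column, Q₂ = project the constant none; these are equivalent as CAQs, but instantiating v with e(x) = some 0 when x = none (e.g., IFNULL(c,0)) breaks equivalence whenever B is nonempty. -/
import Mathlib

attribute [local instance] Multiset.decidableExistsMultiset

inductive TV | True3 | False3 | Unknown3
deriving DecidableEq

open TV

def rightJoin {α β : Type*} (A : Multiset α) (B : Multiset β) (c : α → β → TV) :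
    Multiset (Option α × β) :=
  B.bind fun b =>
    if ∃ a ∈ A, c a b = True3 then
      (A.filter (fun a => c a b = True3)).map (fun a => (some a, b))
    else {(none, b)}

lemma rj_false {α β : Type*} [DecidableEq α] (A : Multiset α) (B : Multiset β) :
    rightJoin A B (fun _ _ => False3) = B.map (fun b => (none, b)) := by
  simp only [rightJoin]
  rw [← Multiset.bind_singleton B (fun b => ((none : Option α), b))]
  congr 1; funext b; simp

/-- Null-preservation is necessary: the CAQs `Q₁` (project the virtual left-side
column of `A RIGHT JOIN B ON FALSE`) and `Q₂` (project the constant `none`) are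
equivalent for all databases, but instantiating the virtual column with the
non-null-preserving expression `e x = some (x.getD 0)` (i.e., `IFNULL(c,0)`)
breaks equivalence whenever `B` is nonempty. -/
theorem null_preserving_necessary :
    (∀ (A : Multiset (Option ℤ)) (B : Multiset Unit),
        (rightJoin A B (fun _ _ => False3)).map (fun q => q.1.bind id) =
          B.map (fun _ => (none : Option ℤ))) ∧
    (fun x : Option ℤ => some (x.getD 0)) none ≠ none ∧
    ∃ (A : Multiset (Option ℤ)) (B : Multiset Unit), B ≠ 0 ∧
      (rightJoin A B (fun _ _ => False3)).map
          (fun q => (fun x : Option ℤ => some (x.getD 0)) (q.1.bind id)) ≠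
        B.map (fun _ => (none : Option ℤ)) := by
  refine ⟨fun A B => ?_, by simp, 0, {()}, by simp, ?_⟩
  · rw [rj_false, Multiset.map_map]; rfl
  · rw [rj_false]; decide
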